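/- Let A be a G-graded ring, M a G-graded left A-module, and B = END_A(M) the G-graded ring of graded endomorphisms of M. Then B is an epsilon-strongly graded ring if and only if M ∼_sd M(l) for every l ∈ supp(B). -/

import Mathlib

/-- A `G`-grading on a unital ring `A`: a family of additive subgroups with
`A_g A_h ⊆ A_{gh}`, `1 ∈ A₁`, whose internal direct sum is `A`. -/
structure RingGrading (G : Type*) [Group G] [DecidableEq G]
    (A : Type*) [Ring A] where
  comp : G → AddSubgroup A
  one_mem : (1 : A) ∈ comp 1
  mul_mem : ∀ ⦃g h : G⦄ ⦃a b : A⦄, a ∈ comp g → b ∈ comp h → a * b ∈ comp (g * h)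
  isInternal : DirectSum.IsInternal comp

variable {G : Type*} [Group G] [DecidableEq G] {A : Type*} [Ring A]

/-- A `G`-grading on a left `A`-module `M`, compatible with the ring grading `𝒜`. -/
structure ModGrading (𝒜 : RingGrading G A) (M : Type*)
    [AddCommGroup M] [Module A M] where
  comp : G → AddSubgroup M
  smul_mem : ∀ ⦃g h : G⦄ ⦃a : A⦄ ⦃m : M⦄,
    a ∈ 𝒜.comp g → m ∈ comp h → a • m ∈ comp (g * h)
  isInternal : DirectSum.IsInternal comp

section GradedModules

variable {M N : Type*} [AddCommGroup M] [Module A M] [AddCommGroup N] [Module A N]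

/-- An `A`-linear map `f : M → N` has degree `l` (with respect to given families of
homogeneous components) if `f(M_g) ⊆ N_{gl}` for all `g`.  Taking the family
`g ↦ N_{gl}` as codomain grading realizes graded morphisms `M → N(l)`. -/
def IsDegree (ℳ : G → AddSubgroup M) (𝒩 : G → AddSubgroup N)
    (f : M →ₗ[A] N) (l : G) : Prop :=
  ∀ g : G, ∀ m ∈ ℳ g, f m ∈ 𝒩 (g * l)

/-- A graded morphism `f : M → N` -- i.e. a degree-one `A`-linear map. -/
def IsGradedHom (ℳ : G → AddSubgroup M) (𝒩 : G → AddSubgroup N)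
    (f : M →ₗ[A] N) : Prop :=
  ∀ g : G, ∀ m ∈ ℳ g, f m ∈ 𝒩 g

/-- A submodule `N'` is graded if `N' = ⊕_g (N' ∩ M_g)`. -/
def IsGradedSubmodule (ℳ : G → AddSubgroup M) (N' : Submodule A M) : Prop :=
  N'.toAddSubgroup = ⨆ g : G, N'.toAddSubgroup ⊓ ℳ g

/-- The grading induced on (the subtype of) a submodule. -/
def subFam (ℳ : G → AddSubgroup M) (N' : Submodule A M) : G → AddSubgroup ↥N' :=
  fun g => (ℳ g).comap N'.subtype.toAddMonoidHom

/-- The componentwise grading on `M⁽ⁿ⁾ = Fin n → M`. -/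
def piFam (ℳ : G → AddSubgroup M) (n : ℕ) : G → AddSubgroup (Fin n → M) :=
  fun g => AddSubgroup.pi Set.univ fun _ => ℳ g

/-- The idempotent endomorphism `ε_{N'} = ι_{N'} ∘ π_{N'}` associated to a direct
sum decomposition `N = N' ⊕ N''`. -/
noncomputable def epsIdem (N' N'' : Submodule A N) (h : IsCompl N' N'') :
    N →ₗ[A] N :=
  N'.subtype ∘ₗ (Submodule.linearProjOfIsCompl (R := A) N' N'' h)

/-- `N` divides `M` (relative to the given gradings): `N` is isomorphic, as a graded
module, to a graded direct summand of `M⁽ⁿ⁾` for some `n`. -/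
def Divides (𝒩 : G → AddSubgroup N) (ℳ : G → AddSubgroup M) : Prop :=
  ∃ (n : ℕ) (V V' : Submodule A (Fin n → M)),
    IsGradedSubmodule (piFam ℳ n) V ∧ IsGradedSubmodule (piFam ℳ n) V' ∧
    IsCompl V V' ∧
    ∃ e : N ≃ₗ[A] ↥V, ∀ (g : G) (x : N),
      x ∈ 𝒩 g ↔ (e x : Fin n → M) ∈ piFam ℳ n g

/-- `N` semi-divides `M` (relative to the given gradings): there is a nonzero graded
direct summand `N'` of `N` with `N' | M`, `ε_{N'} ∘ f = f` for every graded
`f : M → N` and `g ∘ ε_{N'} = g` for every graded `g : N → M`. -/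
def SemiDivides (𝒩 : G → AddSubgroup N) (ℳ : G → AddSubgroup M) : Prop :=
  ∃ (N' N'' : Submodule A N), N' ≠ ⊥ ∧
    IsGradedSubmodule 𝒩 N' ∧ IsGradedSubmodule 𝒩 N'' ∧
    ∃ h : IsCompl N' N'',
      Divides (A := A) (subFam 𝒩 N') ℳ ∧
      (∀ f : M →ₗ[A] N, IsGradedHom ℳ 𝒩 f → epsIdem N' N'' h ∘ₗ f = f) ∧
      (∀ f : N →ₗ[A] M, IsGradedHom 𝒩 ℳ f → f ∘ₗ epsIdem N' N'' h = f)

/-- `M` and `N` are epsilon-similar. -/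
def EpsSimilar (ℳ : G → AddSubgroup M) (𝒩 : G → AddSubgroup N) : Prop :=
  ∃ (M' M'' : Submodule A M) (N' N'' : Submodule A N),
    M' ≠ ⊥ ∧ N' ≠ ⊥ ∧
    IsGradedSubmodule ℳ M' ∧ IsGradedSubmodule ℳ M'' ∧
    IsGradedSubmodule 𝒩 N' ∧ IsGradedSubmodule 𝒩 N'' ∧
    ∃ (hM : IsCompl M' M'') (hN : IsCompl N' N''),
    ∃ (f : M →ₗ[A] N) (g : N →ₗ[A] M),
      IsGradedHom ℳ 𝒩 f ∧ IsGradedHom 𝒩 ℳ g ∧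
      f ∘ₗ g = epsIdem N' N'' hN ∧ g ∘ₗ f = epsIdem M' M'' hM ∧
      (∀ u : M →ₗ[A] N, IsGradedHom ℳ 𝒩 u →
        epsIdem N' N'' hN ∘ₗ u = u ∧ u ∘ₗ epsIdem M' M'' hM = u) ∧
      (∀ v : N →ₗ[A] M, IsGradedHom 𝒩 ℳ v →
        v ∘ₗ epsIdem N' N'' hN = v ∧ epsIdem M' M'' hM ∘ₗ v = v)

end GradedModules

section EndRing

variable {M : Type*} [AddCommGroup M] [Module A M]

/-- The degree-`l` component `B_l = Mor_A(M,M)_l` of the graded ring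
`B = END_A(M)`, as an additive subgroup of the `A`-linear endomorphisms of `M`. -/
def endComp (ℳ : G → AddSubgroup M) (l : G) : AddSubgroup (M →ₗ[A] M) where
  carrier := {f : M →ₗ[A] M | IsDegree ℳ ℳ f l}
  zero_mem' := fun g m _ => by simpa using zero_mem (ℳ (g * l))
  add_mem' := by
    intro u v hu hv g m hm
    simpa using add_mem (hu g m hm) (hv g m hm)
  neg_mem' := by
    intro u hu g m hm
    simpa using neg_mem (hu g m hm)

/-- The product `B_l B_k` inside the graded ring `B = END_A(M)` (whose
multiplication is `u · v = v ∘ u`), as an additive subgroup of `End_A(M)`. -/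
def endMul (ℳ : G → AddSubgroup M) (l k : G) : AddSubgroup (M →ₗ[A] M) :=
  AddSubgroup.closure
    {w : M →ₗ[A] M | ∃ u ∈ endComp ℳ l, ∃ v ∈ endComp ℳ k, w = v ∘ₗ u}

/-- The support of the graded ring `B = END_A(M)`. -/
def endSupp (ℳ : G → AddSubgroup M) : Set G :=
  {l : G | endComp (A := A) ℳ l ≠ ⊥}

/-- `B = END_A(M)` is an epsilon-strongly graded ring: for each `l` there is
`ε_l ∈ B_l B_{l⁻¹}` with `ε_l · u = u = u · ε_{l⁻¹}` for all `u ∈ B_l`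
(products taken in `B`, i.e. `u · v = v ∘ u`). -/
def IsEpsilonStrongEnd (ℳ : G → AddSubgroup M) : Prop :=
  ∃ ε : G → (M →ₗ[A] M), ∀ l : G,
    ε l ∈ endMul ℳ l l⁻¹ ∧
    ∀ u ∈ endComp (A := A) ℳ l, u ∘ₗ ε l = u ∧ ε l⁻¹ ∘ₗ u = u

/-- `B = END_A(M)` is an epsilon-crossed product: it is epsilon-strongly graded and
every component `B_l` contains an epsilon-invertible element. -/
def IsEpsilonCrossedEnd (ℳ : G → AddSubgroup M) : Prop :=
  ∃ ε : G → (M →ₗ[A] M),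
    (∀ l : G,
      ε l ∈ endMul ℳ l l⁻¹ ∧
      ∀ u ∈ endComp (A := A) ℳ l, u ∘ₗ ε l = u ∧ ε l⁻¹ ∘ₗ u = u) ∧
    ∀ l : G, ∃ u ∈ endComp (A := A) ℳ l, ∃ v ∈ endComp (A := A) ℳ l⁻¹,
      v ∘ₗ u = ε l ∧ u ∘ₗ v = ε l⁻¹

end EndRing

set_option linter.unusedSectionVars false

section Infra

variable {M : Type*} [AddCommGroup M] [Module A M]

/-- `x` is a finite sum of homogeneous elements. -/
def SpanProp (𝒮 : G → AddSubgroup M) (x : M) : Prop :=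
  ∃ (s : Finset G) (c : G → M), (∀ g, c g ∈ 𝒮 g) ∧ x = ∑ g ∈ s, c g

lemma spanProp_zero (𝒮 : G → AddSubgroup M) : SpanProp 𝒮 0 :=
  ⟨∅, fun _ => 0, fun g => zero_mem _, by simp⟩

lemma spanProp_add {𝒮 : G → AddSubgroup M} {x y : M}
    (hx : SpanProp 𝒮 x) (hy : SpanProp 𝒮 y) : SpanProp 𝒮 (x + y) := by
  obtain ⟨s, c, hc, rfl⟩ := hx
  obtain ⟨t, d, hd, rfl⟩ := hy
  refine ⟨s ∪ t, fun g => (if g ∈ s then c g else 0) + (if g ∈ t then d g else 0),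
    fun g => add_mem (by split <;> first | exact hc g | exact zero_mem _)
      (by split <;> first | exact hd g | exact zero_mem _), ?_⟩
  rw [Finset.sum_add_distrib, Finset.sum_ite_mem, Finset.sum_ite_mem,
    Finset.union_inter_cancel_left, Finset.union_inter_cancel_right]

lemma spanProp_neg {𝒮 : G → AddSubgroup M} {x : M}
    (hx : SpanProp 𝒮 x) : SpanProp 𝒮 (-x) := by
  obtain ⟨s, c, hc, rfl⟩ := hx
  exact ⟨s, fun g => -(c g), fun g => neg_mem (hc g), by simp⟩

/-- The subgroup of elements which are finite sums of homogeneous elements. -/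
def spanSubgroup (𝒮 : G → AddSubgroup M) : AddSubgroup M where
  carrier := {x | SpanProp 𝒮 x}
  zero_mem' := spanProp_zero 𝒮
  add_mem' := spanProp_add
  neg_mem' := spanProp_neg

lemma le_spanSubgroup (𝒮 : G → AddSubgroup M) (g : G) : 𝒮 g ≤ spanSubgroup 𝒮 := by
  intro x hx
  refine ⟨{g}, fun g' => if h : g' = g then x else 0, fun g' => ?_, by simp⟩
  show (if h : g' = g then x else 0) ∈ 𝒮 g'
  by_cases h : g' = g
  · subst h; rw [dif_pos rfl]; exact hx
  · rw [dif_neg h]; exact zero_mem _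

lemma spanProp_of_mem_iSup {𝒮 : G → AddSubgroup M} {x : M}
    (hx : x ∈ ⨆ g, 𝒮 g) : SpanProp 𝒮 x :=
  (iSup_le (le_spanSubgroup 𝒮) : (⨆ g, 𝒮 g) ≤ spanSubgroup 𝒮) hx

/-- Every element decomposes as a finite sum of homogeneous elements. -/
def IsSpanning (𝒮 : G → AddSubgroup M) : Prop := ∀ x : M, SpanProp 𝒮 x

/-- Uniqueness of homogeneous decompositions. -/
def IsUniq (𝒮 : G → AddSubgroup M) : Prop :=
  ∀ (s : Finset G) (c : G → M), (∀ g, c g ∈ 𝒮 g) → ∑ g ∈ s, c g = 0 →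
    ∀ g ∈ s, c g = 0

lemma IsInternal.isSpanning {𝒮 : G → AddSubgroup M}
    (h : DirectSum.IsInternal 𝒮) : IsSpanning 𝒮 := by
  intro x
  obtain ⟨y, rfl⟩ := h.surjective x
  change DirectSum.coeAddMonoidHom 𝒮 y ∈ spanSubgroup 𝒮
  induction y using DirectSum.induction_on with
  | zero => simp only [map_zero]; exact zero_mem _
  | of i x =>
      rw [DirectSum.coeAddMonoidHom_of]
      exact le_spanSubgroup 𝒮 i x.2
  | add a b ha hb => rw [map_add]; exact add_mem ha hb

lemma IsInternal.isUniq {𝒮 : G → AddSubgroup M}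
    (h : DirectSum.IsInternal 𝒮) : IsUniq 𝒮 := by
  intro s c hc hsum g hg
  classical
  set y : DirectSum G (fun g => ↥(𝒮 g)) := ∑ g ∈ s, DirectSum.of (fun g => ↥(𝒮 g)) g ⟨c g, hc g⟩ with hy
  have h1 : DirectSum.coeAddMonoidHom 𝒮 y = 0 := by
    rw [hy, map_sum]
    simpa [DirectSum.coeAddMonoidHom_of] using hsum
  have h2 : y = 0 := h.injective (by rw [h1, map_zero])
  have h3 : y g = 0 := by rw [h2]; rfl
  rw [hy, DFinsupp.finset_sum_apply] at h3
  have h4 : ∑ a ∈ s, ((DirectSum.of (fun g => ↥(𝒮 g)) a) ⟨c a, hc a⟩) g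
      = ((DirectSum.of (fun g => ↥(𝒮 g)) g) ⟨c g, hc g⟩) g :=
    Finset.sum_eq_single_of_mem g hg (fun b _ hne => DirectSum.of_eq_of_ne _ _ _ (Ne.symm hne))
  rw [h4, DirectSum.of_eq_same] at h3
  exact congrArg Subtype.val h3

end Infra

section Transfer

variable {M : Type*} [AddCommGroup M] [Module A M]

lemma IsSpanning.susp {ℳ : G → AddSubgroup M} (h : IsSpanning ℳ) (l : G) :
    IsSpanning (fun g => ℳ (g * l)) := by
  intro x
  obtain ⟨s, c, hc, rfl⟩ := h x
  refine ⟨s.image (· * l⁻¹), fun g => c (g * l), fun g => by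
    simpa using hc (g * l), ?_⟩
  rw [Finset.sum_image (by intro a _ b _ hab; simpa using hab)]
  simp [inv_mul_cancel_right]

lemma IsUniq.susp {ℳ : G → AddSubgroup M} (h : IsUniq ℳ) (l : G) :
    IsUniq (fun g => ℳ (g * l)) := by
  intro s c hc hsum g hg
  have := h (s.image (· * l)) (fun g => c (g * l⁻¹))
    (fun g => by simpa [mul_assoc] using hc (g * l⁻¹)) ?_ (g * l) (Finset.mem_image_of_mem _ hg)
  · simpa using this
  · rw [Finset.sum_image (by intro a _ b _ hab; simpa using hab)]
    simpa [mul_inv_cancel_right] using hsum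

lemma IsSpanning.piFam {ℳ : G → AddSubgroup M} (h : IsSpanning ℳ) (n : ℕ) :
    IsSpanning (piFam ℳ n) := by
  intro x
  have hch : ∀ i : Fin n, ∃ (s : Finset G) (c : G → M),
      (∀ g, c g ∈ ℳ g) ∧ x i = ∑ g ∈ s, c g := fun i => h (x i)
  choose s c hc hx using hch
  refine ⟨Finset.univ.biUnion s, fun g i => if g ∈ s i then c i g else 0,
    fun g i _ => by
      show (if g ∈ s i then c i g else 0) ∈ ℳ g
      split <;> first | exact hc i g | exact zero_mem _, ?_⟩
  funext i
  rw [Finset.sum_apply]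
  show x i = ∑ g ∈ Finset.univ.biUnion s, if g ∈ s i then c i g else 0
  rw [Finset.sum_ite_mem, Finset.inter_eq_right.mpr
    (fun g hgi => Finset.mem_biUnion.mpr ⟨i, Finset.mem_univ i, hgi⟩)]
  exact hx i

lemma IsUniq.piFam {ℳ : G → AddSubgroup M} (h : IsUniq ℳ) (n : ℕ) :
    IsUniq (piFam ℳ n) := by
  intro s c hc hsum g hg
  funext i
  refine h s (fun g => c g i) (fun g => (hc g) i (Set.mem_univ i)) ?_ g hg
  have := congrFun hsum i
  rw [Finset.sum_apply] at this
  exact this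

end Transfer

section GradedSub

variable {M : Type*} [AddCommGroup M] [Module A M]
variable {P : Type*} [AddCommGroup P] [Module A P]

lemma isGradedSubmodule_range {ℳ : G → AddSubgroup M} {𝒬 : G → AddSubgroup P}
    (hsp : IsSpanning ℳ) {f : M →ₗ[A] P} (hf : IsGradedHom ℳ 𝒬 f) :
    IsGradedSubmodule 𝒬 (LinearMap.range f) := by
  refine le_antisymm ?_ (iSup_le fun g => inf_le_left)
  intro x hx
  rw [Submodule.mem_toAddSubgroup] at hx
  obtain ⟨y, rfl⟩ := hx
  obtain ⟨s, cc, hcc, rfl⟩ := hsp y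
  rw [map_sum]
  refine sum_mem fun g hgs => ?_
  refine AddSubgroup.mem_iSup_of_mem g ?_
  rw [AddSubgroup.mem_inf]
  exact ⟨(Submodule.mem_toAddSubgroup _).mpr (LinearMap.mem_range_self f (cc g)),
    hf g (cc g) (hcc g)⟩

lemma isGradedSubmodule_ker {ℳ : G → AddSubgroup M} {𝒬 : G → AddSubgroup P}
    (hsp : IsSpanning ℳ) (hun : IsUniq 𝒬) {f : M →ₗ[A] P} (hf : IsGradedHom ℳ 𝒬 f) :
    IsGradedSubmodule ℳ (LinearMap.ker f) := by
  refine le_antisymm ?_ (iSup_le fun g => inf_le_left)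
  intro x hx
  rw [Submodule.mem_toAddSubgroup, LinearMap.mem_ker] at hx
  obtain ⟨s, cc, hcc, rfl⟩ := hsp x
  rw [map_sum] at hx
  have hz : ∀ g ∈ s, f (cc g) = 0 :=
    hun s (fun g => f (cc g)) (fun g => hf g (cc g) (hcc g)) hx
  refine sum_mem fun g hgs => ?_
  refine AddSubgroup.mem_iSup_of_mem g ?_
  rw [AddSubgroup.mem_inf]
  exact ⟨(Submodule.mem_toAddSubgroup _).mpr (LinearMap.mem_ker.mpr (hz g hgs)), hcc g⟩

/-- the key uniqueness step: if `x` is homogeneous of degree `g`, `v ∈ V`,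
`x - v ∈ V'` with `V, V'` graded and disjoint, then `v` is homogeneous of degree `g`. -/
lemma homogeneous_component_of_graded_pair {𝒢 : G → AddSubgroup M} (hun : IsUniq 𝒢)
    {V V' : Submodule A M} (hV : IsGradedSubmodule 𝒢 V) (hV' : IsGradedSubmodule 𝒢 V')
    (hdisj : Disjoint V V') {g : G} {x v : M} (hx : x ∈ 𝒢 g) (hv : v ∈ V)
    (hv' : x - v ∈ V') : v ∈ 𝒢 g := by
  classical
  have h1 : SpanProp (fun h => V.toAddSubgroup ⊓ 𝒢 h) v :=
    spanProp_of_mem_iSup (by rw [← hV]; exact (Submodule.mem_toAddSubgroup _).mpr hv)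
  have h2 : SpanProp (fun h => V'.toAddSubgroup ⊓ 𝒢 h) (x - v) :=
    spanProp_of_mem_iSup (by rw [← hV']; exact (Submodule.mem_toAddSubgroup _).mpr hv')
  obtain ⟨s, a, ha, hva⟩ := h1
  obtain ⟨t, b, hb, hvb⟩ := h2
  -- combined family
  set cc : G → M := fun h =>
    (if h ∈ s then a h else 0) + (if h ∈ t then b h else 0) - (if h = g then x else 0)
    with hcc
  have hmem : ∀ h, cc h ∈ 𝒢 h := by
    intro h
    refine sub_mem (add_mem ?_ ?_) ?_
    · split
      · exact ((AddSubgroup.mem_inf).mp (ha h)).2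
      · exact zero_mem _
    · split
      · exact ((AddSubgroup.mem_inf).mp (hb h)).2
      · exact zero_mem _
    · split
      · next hh => subst hh; exact hx
      · exact zero_mem _
  have hsum : ∑ h ∈ (s ∪ t) ∪ {g}, cc h = 0 := by
    rw [hcc]
    simp only [Finset.sum_sub_distrib, Finset.sum_add_distrib]
    rw [Finset.sum_ite_mem, Finset.sum_ite_mem, Finset.sum_ite_eq' ((s ∪ t) ∪ {g})]
    rw [Finset.inter_eq_right.mpr (fun h hh => by simp [Finset.mem_union, hh]),
      Finset.inter_eq_right.mpr (fun h hh => by simp [Finset.mem_union, hh]),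
      if_pos (by simp)]
    rw [← hva, ← hvb]
    abel
  have hz := hun _ cc hmem hsum
  -- each a h for h ≠ g vanishes
  have haz : ∀ h ∈ s, h ≠ g → a h = 0 := by
    intro h hhs hhg
    have hch := hz h (by simp [Finset.mem_union, hhs])
    rw [hcc] at hch
    simp only [if_pos hhs, if_neg hhg, sub_zero] at hch
    have haV : a h ∈ V := ((AddSubgroup.mem_inf).mp (ha h)).1
    have haV' : a h ∈ V' := by
      have h5 : a h = -(if h ∈ t then b h else 0) :=
        eq_neg_of_add_eq_zero_left hch
      rw [h5]
      refine neg_mem ?_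
      split
      · exact ((AddSubgroup.mem_inf).mp (hb h)).1
      · exact zero_mem _
    exact (Submodule.disjoint_def.mp hdisj) (a h) haV haV'
  have hvg : v = if g ∈ s then a g else 0 := by
    rw [hva, ← Finset.sum_ite_eq' s g a]
    refine Finset.sum_congr rfl fun h hh => ?_
    by_cases hhg : h = g
    · rw [if_pos hhg]
    · rw [if_neg hhg, haz h hh hhg]
  rw [hvg]
  split
  · exact ((AddSubgroup.mem_inf).mp (ha g)).2
  · exact zero_mem _

end GradedSub

section Idem

variable {M : Type*} [AddCommGroup M] [Module A M]

lemma isProj_range_of_idem {π : M →ₗ[A] M} (h : π ∘ₗ π = π) :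
    LinearMap.IsProj (LinearMap.range π) π := by
  refine ⟨fun x => LinearMap.mem_range_self π x, ?_⟩
  rintro x ⟨y, rfl⟩
  exact congrArg (fun f => f y) h.symm ▸ (LinearMap.congr_fun h y)

lemma isCompl_range_ker_of_idem {π : M →ₗ[A] M} (h : π ∘ₗ π = π) :
    IsCompl (LinearMap.range π) (LinearMap.ker π) :=
  (isProj_range_of_idem h).isCompl

lemma epsIdem_of_idem {π : M →ₗ[A] M} (h : π ∘ₗ π = π)
    (hc : IsCompl (LinearMap.range π) (LinearMap.ker π)) :
    epsIdem (LinearMap.range π) (LinearMap.ker π) hc = π := by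
  ext x
  have hx : x = π x + (x - π x) := by abel
  have h1 : (Submodule.linearProjOfIsCompl _ _ hc) (π x)
      = ⟨π x, LinearMap.mem_range_self π x⟩ :=
    Submodule.linearProjOfIsCompl_apply_left hc ⟨π x, LinearMap.mem_range_self π x⟩
  have h2 : (Submodule.linearProjOfIsCompl _ _ hc) (x - π x) = 0 := by
    apply Submodule.linearProjOfIsCompl_apply_right' hc
    rw [LinearMap.mem_ker, map_sub, ← LinearMap.comp_apply, h, sub_self]
  show ((Submodule.linearProjOfIsCompl _ _ hc) x : M) = π x
  conv_lhs => rw [hx]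
  rw [map_add, h1, h2, add_zero]

/-- Projection onto a graded direct summand is a graded map. -/
lemma epsIdem_graded {𝒢 : G → AddSubgroup M} (hun : IsUniq 𝒢)
    {V V' : Submodule A M} (hV : IsGradedSubmodule 𝒢 V) (hV' : IsGradedSubmodule 𝒢 V')
    (h : IsCompl V V') : IsGradedHom 𝒢 𝒢 (epsIdem V V' h) := by
  intro g x hx
  set v : M := ((Submodule.linearProjOfIsCompl V V' h) x : M) with hv
  have hvV : v ∈ V := ((Submodule.linearProjOfIsCompl V V' h) x).2
  have hv' : x - v ∈ V' := by
    have h6 := Submodule.projection_add_projection_eq_self h x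
    have : x - v = ((V'.linearProjOfIsCompl V h.symm) x : M) := by
      rw [sub_eq_iff_eq_add, add_comm]; exact h6.symm
    rw [this]
    exact ((V'.linearProjOfIsCompl V h.symm) x).2
  exact homogeneous_component_of_graded_pair hun hV hV' h.disjoint hx hvV hv'

end Idem

section DividesConstruction

variable {M : Type*} [AddCommGroup M] [Module A M]

lemma mem_piFam {ℳ : G → AddSubgroup M} {n : ℕ} {g : G} {x : Fin n → M} :
    x ∈ piFam ℳ n g ↔ ∀ i, x i ∈ ℳ g := by
  constructor
  · exact fun h i => h i (Set.mem_univ i)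
  · exact fun h i _ => h i

lemma divides_of_rep {ℳ₁ ℳ₂ : G → AddSubgroup M}
    (hsp2 : IsSpanning ℳ₂) (hun2 : IsUniq ℳ₂)
    {ε : M →ₗ[A] M} {n : ℕ} {u v : Fin n → (M →ₗ[A] M)}
    (hu : ∀ i, IsGradedHom ℳ₁ ℳ₂ (u i)) (hv : ∀ i, IsGradedHom ℳ₂ ℳ₁ (v i))
    (hrep : ε = ∑ i, v i ∘ₗ u i) (hid : ε ∘ₗ ε = ε) :
    Divides (A := A) (subFam ℳ₁ (LinearMap.range ε)) ℳ₂ := by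
  classical
  set Φ : M →ₗ[A] (Fin n → M) := LinearMap.pi u with hΦ
  set Ψ : (Fin n → M) →ₗ[A] M := ∑ i, (v i) ∘ₗ (LinearMap.proj i) with hΨ
  have hΦap : ∀ (m : M) (i : Fin n), Φ m i = u i m := fun m i => rfl
  have hΨap : ∀ m : Fin n → M, Ψ m = ∑ i, v i (m i) := by
    intro m
    rw [hΨ, LinearMap.sum_apply]
    rfl
  have hεap : ∀ m : M, ε m = ∑ i, v i (u i m) := by
    intro m
    rw [hrep, LinearMap.sum_apply]
    rfl
  have hΨΦ : ∀ m : M, Ψ (Φ m) = ε m := by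
    intro m
    rw [hΨap, hεap]
    simp only [hΦap]
  have hεε : ∀ m : M, ε (ε m) = ε m := fun m => LinearMap.congr_fun hid m
  have heps : ∀ z ∈ LinearMap.range ε, ε z = z := by
    rintro z ⟨y, rfl⟩
    exact hεε y
  set q : (Fin n → M) →ₗ[A] (Fin n → M) := (Φ ∘ₗ ε) ∘ₗ Ψ with hq
  have hqap : ∀ m : Fin n → M, q m = Φ (ε (Ψ m)) := fun m => rfl
  have hq2 : q ∘ₗ q = q := by
    apply LinearMap.ext
    intro m
    show q (q m) = q m
    rw [hqap, hqap m, hΨΦ, hεε, hεε]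
  -- gradedness
  have hεgr : IsGradedHom ℳ₁ ℳ₁ ε := by
    intro g m hm
    rw [hεap]
    exact sum_mem fun i _ => hv i g _ (hu i g m hm)
  have hΦgr : IsGradedHom ℳ₁ (piFam ℳ₂ n) Φ := by
    intro g m hm
    rw [mem_piFam]
    exact fun i => hu i g m hm
  have hΨgr : IsGradedHom (piFam ℳ₂ n) ℳ₁ Ψ := by
    intro g m hm
    rw [hΨap]
    exact sum_mem fun i _ => hv i g _ (mem_piFam.mp hm i)
  have hqgr : IsGradedHom (piFam ℳ₂ n) (piFam ℳ₂ n) q := by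
    intro g m hm
    rw [hqap]
    exact hΦgr g _ (hεgr g _ (hΨgr g m hm))
  have hgV : IsGradedSubmodule (piFam ℳ₂ n) (LinearMap.range q) :=
    isGradedSubmodule_range (hsp2.piFam n) hqgr
  have hgV' : IsGradedSubmodule (piFam ℳ₂ n) (LinearMap.ker q) :=
    isGradedSubmodule_ker (hsp2.piFam n) (hun2.piFam n) hqgr
  have hcompl : IsCompl (LinearMap.range q) (LinearMap.ker q) :=
    isCompl_range_ker_of_idem hq2
  -- the isomorphism
  have he0V : ∀ x : ↥(LinearMap.range ε), Φ (x : M) ∈ LinearMap.range q := by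
    intro x
    refine ⟨Φ (x : M), ?_⟩
    rw [hqap, hΨΦ, hεε, heps _ x.2]
  set e1 : ↥(LinearMap.range ε) →ₗ[A] ↥(LinearMap.range q) :=
    LinearMap.codRestrict (LinearMap.range q) (Φ ∘ₗ (LinearMap.range ε).subtype)
      he0V with he1
  have he1ap : ∀ x : ↥(LinearMap.range ε), (e1 x : Fin n → M) = Φ (x : M) :=
    fun x => rfl
  have hinj : Function.Injective e1 := by
    intro x y hxy
    have h1 : Φ (x : M) = Φ (y : M) := by
      rw [← he1ap, ← he1ap, hxy]
    have h2 : ε (x : M) = ε (y : M) := by rw [← hΨΦ, ← hΨΦ, h1]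
    rw [heps _ x.2, heps _ y.2] at h2
    exact Subtype.ext h2
  have hsurj : Function.Surjective e1 := by
    rintro ⟨y, m, rfl⟩
    refine ⟨⟨ε (Ψ m), LinearMap.mem_range_self ε _⟩, ?_⟩
    apply Subtype.ext
    rw [he1ap]
    show Φ (ε (Ψ m)) = q m
    rw [hqap]
  refine ⟨n, LinearMap.range q, LinearMap.ker q, hgV, hgV', hcompl,
    LinearEquiv.ofBijective e1 ⟨hinj, hsurj⟩, ?_⟩
  intro g x
  have hcoe : ((LinearEquiv.ofBijective e1 ⟨hinj, hsurj⟩) x : Fin n → M) = Φ (x : M) :=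
    he1ap x
  rw [hcoe]
  constructor
  · intro hx
    exact hΦgr g _ hx
  · intro hx
    show (x : M) ∈ ℳ₁ g
    have h3 : (x : M) = ∑ i, v i (u i (x : M)) := by
      rw [← hεap, heps _ x.2]
    rw [h3]
    refine sum_mem fun i _ => hv i g _ ?_
    have := mem_piFam.mp hx i
    rwa [hΦap] at this
end DividesConstruction

section SemiDiv

variable {M : Type*} [AddCommGroup M] [Module A M]

lemma semiDivides_construct {𝒩 ℳ₂ : G → AddSubgroup M}
    (hspN : IsSpanning 𝒩) (hunN : IsUniq 𝒩)
    (hsp2 : IsSpanning ℳ₂) (hun2 : IsUniq ℳ₂)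
    {ε : M →ₗ[A] M} (hε0 : ε ≠ 0) {n : ℕ} {u v : Fin n → (M →ₗ[A] M)}
    (hu : ∀ i, IsGradedHom 𝒩 ℳ₂ (u i)) (hv : ∀ i, IsGradedHom ℳ₂ 𝒩 (v i))
    (hrep : ε = ∑ i, v i ∘ₗ u i) (hid : ε ∘ₗ ε = ε)
    (habs1 : ∀ f : M →ₗ[A] M, IsGradedHom ℳ₂ 𝒩 f → ε ∘ₗ f = f)
    (habs2 : ∀ f : M →ₗ[A] M, IsGradedHom 𝒩 ℳ₂ f → f ∘ₗ ε = f) :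
    SemiDivides (A := A) 𝒩 ℳ₂ := by
  have hεgr : IsGradedHom 𝒩 𝒩 ε := by
    intro g m hm
    have : ε m = ∑ i, v i (u i m) := by rw [hrep, LinearMap.sum_apply]; rfl
    rw [this]
    exact sum_mem fun i _ => hv i g _ (hu i g m hm)
  have hcompl := isCompl_range_ker_of_idem hid
  refine ⟨LinearMap.range ε, LinearMap.ker ε, ?_,
    isGradedSubmodule_range hspN hεgr, isGradedSubmodule_ker hspN hunN hεgr,
    hcompl, divides_of_rep hsp2 hun2 hu hv hrep hid, ?_, ?_⟩
  · rw [Ne, LinearMap.range_eq_bot]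
    exact hε0
  · intro f hf
    rw [epsIdem_of_idem hid]
    exact habs1 f hf
  · intro f hf
    rw [epsIdem_of_idem hid]
    exact habs2 f hf

lemma semiDivides_extract {𝒩 ℳ₂ : G → AddSubgroup M}
    (hunN : IsUniq 𝒩) (hun2 : IsUniq ℳ₂)
    (h : SemiDivides (A := A) 𝒩 ℳ₂) :
    ∃ (ε : M →ₗ[A] M) (n : ℕ) (σ w : Fin n → (M →ₗ[A] M)),
      ε ≠ 0 ∧ (∀ i, IsGradedHom 𝒩 ℳ₂ (σ i)) ∧ (∀ i, IsGradedHom ℳ₂ 𝒩 (w i)) ∧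
      ε = ∑ i, w i ∘ₗ σ i ∧
      (∀ f : M →ₗ[A] M, IsGradedHom ℳ₂ 𝒩 f → ε ∘ₗ f = f) ∧
      (∀ f : M →ₗ[A] M, IsGradedHom 𝒩 ℳ₂ f → f ∘ₗ ε = f) := by
  classical
  obtain ⟨N', N'', hne, hgN', hgN'', hcompl, hdiv, hab1, hab2⟩ := h
  obtain ⟨n, V, V', hgV, hgV', hVc, e, he⟩ := hdiv
  set pN : M →ₗ[A] ↥N' := Submodule.linearProjOfIsCompl N' N'' hcompl with hpN
  set pV : (Fin n → M) →ₗ[A] ↥V := Submodule.linearProjOfIsCompl V V' hVc with hpV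
  set ε : M →ₗ[A] M := epsIdem N' N'' hcompl with hε
  have hεap : ∀ m : M, ε m = (pN m : M) := fun m => rfl
  have hεgr : IsGradedHom 𝒩 𝒩 ε := epsIdem_graded hunN hgN' hgN'' hcompl
  have hπgr : IsGradedHom (piFam ℳ₂ n) (piFam ℳ₂ n) (epsIdem V V' hVc) :=
    epsIdem_graded (hun2.piFam n) hgV hgV' hVc
  have hπap : ∀ y : Fin n → M, epsIdem V V' hVc y = (pV y : Fin n → M) := fun y => rfl
  set σ : Fin n → (M →ₗ[A] M) :=
    fun i => LinearMap.proj i ∘ₗ (V.subtype ∘ₗ (e.toLinearMap ∘ₗ pN)) with hσ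
  set w : Fin n → (M →ₗ[A] M) :=
    fun i => N'.subtype ∘ₗ ((e.symm.toLinearMap ∘ₗ pV) ∘ₗ
      LinearMap.single A (fun _ : Fin n => M) i) with hw
  have hσap : ∀ (i : Fin n) (m : M), σ i m = (e (pN m) : Fin n → M) i := fun i m => rfl
  have hwap : ∀ (i : Fin n) (m : M), w i m = (e.symm (pV (Pi.single i m)) : M) :=
    fun i m => rfl
  have hmemN' : ∀ (g : G) (x : ↥N'), x ∈ subFam 𝒩 N' g ↔ (x : M) ∈ 𝒩 g :=
    fun g x => Iff.rfl
  refine ⟨ε, n, σ, w, ?_, ?_, ?_, ?_, ?_, ?_⟩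
  · -- ε ≠ 0
    obtain ⟨x, hxN, hx0⟩ := Submodule.exists_mem_ne_zero_of_ne_bot hne
    intro h0
    apply hx0
    have h1 : pN x = ⟨x, hxN⟩ :=
      Submodule.linearProjOfIsCompl_apply_left hcompl ⟨x, hxN⟩
    have h2 : ε x = x := by rw [hεap, h1]
    rw [h0] at h2
    simpa using h2.symm
  · -- σ graded
    intro i g m hm
    rw [hσap]
    have h1 : (pN m : M) ∈ 𝒩 g := by rw [← hεap]; exact hεgr g m hm
    have h2 : pN m ∈ subFam 𝒩 N' g := h1
    have h3 := (he g (pN m)).mp h2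
    exact mem_piFam.mp h3 i
  · -- w graded
    intro i g m hm
    rw [hwap]
    have hsing : Pi.single i m ∈ piFam ℳ₂ n g := by
      rw [mem_piFam]
      intro j
      rw [Pi.single_apply]
      split
      · next hji => subst hji; exact hm
      · exact zero_mem _
    have h1 : (pV (Pi.single i m) : Fin n → M) ∈ piFam ℳ₂ n g := by
      rw [← hπap]; exact hπgr g _ hsing
    have h2 : (e (e.symm (pV (Pi.single i m))) : Fin n → M) ∈ piFam ℳ₂ n g := by
      rw [e.apply_symm_apply]; exact h1
    exact (he g _).mpr h2
  · -- representation
    apply LinearMap.ext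
    intro m
    rw [LinearMap.sum_apply]
    have h1 : ∀ i : Fin n, (w i ∘ₗ σ i) m
        = (N'.subtype ∘ₗ (e.symm.toLinearMap ∘ₗ pV))
            (Pi.single i ((e (pN m) : Fin n → M) i)) := fun i => rfl
    simp only [h1]
    rw [← map_sum (N'.subtype ∘ₗ (e.symm.toLinearMap ∘ₗ pV))
      (fun i => Pi.single i ((e (pN m) : Fin n → M) i)) Finset.univ]
    rw [Finset.univ_sum_single (e (pN m) : Fin n → M)]
    show ε m = (e.symm (pV (e (pN m) : Fin n → M)) : M)
    have h2 : pV ((e (pN m) : Fin n → M)) = e (pN m) :=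
      Submodule.linearProjOfIsCompl_apply_left hVc (e (pN m))
    rw [h2, e.symm_apply_apply, hεap]
  · exact hab1
  · exact hab2

end SemiDiv

section EndMulRep

variable {M : Type*} [AddCommGroup M] [Module A M]

lemma mem_endMul_of_rep {ℳ : G → AddSubgroup M} {l k : G} {n : ℕ}
    {u v : Fin n → (M →ₗ[A] M)}
    (hu : ∀ i, u i ∈ endComp (A := A) ℳ l) (hv : ∀ i, v i ∈ endComp (A := A) ℳ k) :
    (∑ i, v i ∘ₗ u i) ∈ endMul ℳ l k :=
  sum_mem fun i _ => AddSubgroup.subset_closure ⟨u i, hu i, v i, hv i, rfl⟩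

/-- The subgroup of endomorphisms representable as `∑ vᵢ ∘ uᵢ`. -/
private def repSubgroup (ℳ : G → AddSubgroup M) (l k : G) : AddSubgroup (M →ₗ[A] M) where
  carrier := {w | ∃ (n : ℕ) (u v : Fin n → (M →ₗ[A] M)),
    (∀ i, u i ∈ endComp (A := A) ℳ l) ∧ (∀ i, v i ∈ endComp (A := A) ℳ k) ∧
    w = ∑ i, v i ∘ₗ u i}
  zero_mem' := ⟨0, fun _ => 0, fun _ => 0, fun i => i.elim0, fun i => i.elim0, by simp⟩
  add_mem' := by
    rintro w w' ⟨n, u, v, hu, hv, rfl⟩ ⟨m, u', v', hu', hv', rfl⟩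
    refine ⟨n + m, Fin.append u u', Fin.append v v', ?_, ?_, ?_⟩
    · intro i
      refine Fin.addCases (fun j => ?_) (fun j => ?_) i
      · rw [Fin.append_left]; exact hu j
      · rw [Fin.append_right]; exact hu' j
    · intro i
      refine Fin.addCases (fun j => ?_) (fun j => ?_) i
      · rw [Fin.append_left]; exact hv j
      · rw [Fin.append_right]; exact hv' j
    · rw [Fin.sum_univ_add]
      congr 1
      · exact Finset.sum_congr rfl fun j _ => by rw [Fin.append_left, Fin.append_left]
      · exact Finset.sum_congr rfl fun j _ => by rw [Fin.append_right, Fin.append_right]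
  neg_mem' := by
    rintro w ⟨n, u, v, hu, hv, rfl⟩
    refine ⟨n, u, fun i => -(v i), hu, fun i => neg_mem (hv i), ?_⟩
    rw [← Finset.sum_neg_distrib]
    exact Finset.sum_congr rfl fun i _ => by rw [LinearMap.neg_comp]

lemma rep_of_mem_endMul {ℳ : G → AddSubgroup M} {l k : G} {w : M →ₗ[A] M}
    (hw : w ∈ endMul (A := A) ℳ l k) :
    ∃ (n : ℕ) (u v : Fin n → (M →ₗ[A] M)),
      (∀ i, u i ∈ endComp (A := A) ℳ l) ∧ (∀ i, v i ∈ endComp (A := A) ℳ k) ∧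
      w = ∑ i, v i ∘ₗ u i := by
  have hle : endMul (A := A) ℳ l k ≤ repSubgroup ℳ l k := by
    rw [endMul, AddSubgroup.closure_le]
    rintro w ⟨u0, hu0, v0, hv0, rfl⟩
    exact ⟨1, fun _ => u0, fun _ => v0, fun _ => hu0, fun _ => hv0, by
      rw [Fin.sum_univ_one]⟩
  exact hle hw
end EndMulRep

section Glue

variable {M : Type*} [AddCommGroup M] [Module A M]

lemma mem_endComp_iff {ℳ : G → AddSubgroup M} {l : G} {f : M →ₗ[A] M} :
    f ∈ endComp (A := A) ℳ l ↔ IsGradedHom ℳ (fun g => ℳ (g * l)) f := Iff.rfl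

lemma mem_endComp_inv_iff {ℳ : G → AddSubgroup M} {l : G} {f : M →ₗ[A] M} :
    f ∈ endComp (A := A) ℳ l⁻¹ ↔ IsGradedHom (fun g => ℳ (g * l)) ℳ f := by
  constructor
  · intro h g m hm
    have := h (g * l) m hm
    rwa [mul_inv_cancel_right] at this
  · intro h g m hm
    refine h (g * l⁻¹) m ?_
    show m ∈ ℳ (g * l⁻¹ * l)
    rwa [inv_mul_cancel_right]

lemma sum_comp' {n : ℕ} (f : Fin n → (M →ₗ[A] M)) (g : M →ₗ[A] M) :
    (∑ i, f i) ∘ₗ g = ∑ i, f i ∘ₗ g := by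
  apply LinearMap.ext
  intro m
  rw [LinearMap.comp_apply, LinearMap.sum_apply, LinearMap.sum_apply]
  exact Finset.sum_congr rfl fun i _ => rfl

lemma endMul_idem {ℳ : G → AddSubgroup M} {l : G} {e : M →ₗ[A] M}
    (hm : e ∈ endMul (A := A) ℳ l l⁻¹)
    (habs : ∀ u ∈ endComp (A := A) ℳ l, u ∘ₗ e = u) : e ∘ₗ e = e := by
  obtain ⟨n, u, v, hu, hv, hrep⟩ := rep_of_mem_endMul hm
  nth_rewrite 1 [hrep]
  rw [sum_comp']
  rw [Finset.sum_congr rfl (fun i _ => by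
    rw [LinearMap.comp_assoc, habs (u i) (hu i)])]
  exact hrep.symm

lemma exists_ne_zero_of_ne_bot {H : AddSubgroup (M →ₗ[A] M)} (h : H ≠ ⊥) :
    ∃ x ∈ H, x ≠ 0 := by
  by_contra hc
  push_neg at hc
  exact h ((AddSubgroup.eq_bot_iff_forall H).mpr hc)

end Glue

/-- For a `G`-graded ring `A` and a graded left `A`-module `M`, the
graded ring `B = END_A(M)` is epsilon-strongly graded iff `M ∼_sd M(l)` for every
`l ∈ supp(B)` (i.e. `M` semi-divides the suspension `M(l)` and vice versa). -/
theorem end_isEpsilonStrong_iff {M : Type*} [AddCommGroup M] [Module A M]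
    (𝒜 : RingGrading G A) (ℳ : ModGrading 𝒜 M) :
    IsEpsilonStrongEnd (A := A) ℳ.comp ↔
      ∀ l ∈ endSupp (A := A) ℳ.comp,
        SemiDivides (A := A) ℳ.comp (fun g => ℳ.comp (g * l)) ∧
        SemiDivides (A := A) (fun g => ℳ.comp (g * l)) ℳ.comp := by
  classical
  have hsp : IsSpanning ℳ.comp := IsInternal.isSpanning ℳ.isInternal
  have hun : IsUniq ℳ.comp := IsInternal.isUniq ℳ.isInternal
  constructor
  · rintro ⟨ε, hε⟩ l hl
    have hl' : endComp (A := A) ℳ.comp l ≠ ⊥ := hl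
    obtain ⟨u₀, hu₀mem, hu₀ne⟩ := exists_ne_zero_of_ne_bot hl'
    obtain ⟨n, u, v, hu, hv, hrepl⟩ := rep_of_mem_endMul (hε l).1
    obtain ⟨m, u', v', hu', hv', hrepli⟩ := rep_of_mem_endMul (hε l⁻¹).1
    rw [inv_inv] at hv'
    have hidl : ε l ∘ₗ ε l = ε l :=
      endMul_idem (hε l).1 (fun w hw => ((hε l).2 w hw).1)
    have hidli : ε l⁻¹ ∘ₗ ε l⁻¹ = ε l⁻¹ :=
      endMul_idem (hε l⁻¹).1 (fun w hw => ((hε l⁻¹).2 w hw).1)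
    have hεlne : ε l ≠ 0 := by
      intro h0
      apply hu₀ne
      have h1 := ((hε l).2 u₀ hu₀mem).1
      rw [h0, LinearMap.comp_zero] at h1
      exact h1.symm
    have hεline : ε l⁻¹ ≠ 0 := by
      intro h0
      apply hu₀ne
      have h1 := ((hε l).2 u₀ hu₀mem).2
      rw [h0, LinearMap.zero_comp] at h1
      exact h1.symm
    constructor
    · refine semiDivides_construct hsp hun (hsp.susp l) (hun.susp l) hεlne
        (u := u) (v := v)
        (fun i => mem_endComp_iff.mp (hu i))
        (fun i => mem_endComp_inv_iff.mp (hv i)) hrepl hidl ?_ ?_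
      · intro f hf
        have h1 := ((hε l⁻¹).2 f (mem_endComp_inv_iff.mpr hf)).2
        rwa [inv_inv] at h1
      · intro f hf
        exact ((hε l).2 f (mem_endComp_iff.mpr hf)).1
    · refine semiDivides_construct (hsp.susp l) (hun.susp l) hsp hun hεline
        (u := u') (v := v')
        (fun i => mem_endComp_inv_iff.mp (hu' i))
        (fun i => mem_endComp_iff.mp (hv' i)) hrepli hidli ?_ ?_
      · intro f hf
        exact ((hε l).2 f (mem_endComp_iff.mpr hf)).2
      · intro f hf
        exact ((hε l⁻¹).2 f (mem_endComp_inv_iff.mpr hf)).1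
  · intro H
    have hsymm : ∀ l ∈ endSupp (A := A) ℳ.comp, l⁻¹ ∈ endSupp (A := A) ℳ.comp := by
      intro l hl
      obtain ⟨ε'', n, σ, w, hne, hσ, hw, hrep, hab1, hab2⟩ :=
        semiDivides_extract (hun.susp l) hun (H l hl).2
      intro hbot
      apply hne
      have hσ0 : ∀ i, σ i = 0 := by
        intro i
        have h1 : σ i ∈ endComp (A := A) ℳ.comp l⁻¹ := mem_endComp_inv_iff.mpr (hσ i)
        rw [hbot] at h1
        exact AddSubgroup.mem_bot.mp h1
      rw [hrep]
      refine Finset.sum_eq_zero fun i _ => ?_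
      rw [hσ0 i, LinearMap.comp_zero]
    have key : ∀ l : G, ∃ e : M →ₗ[A] M,
        e ∈ endMul (A := A) ℳ.comp l l⁻¹ ∧
        (∀ w ∈ endComp (A := A) ℳ.comp l, w ∘ₗ e = w) ∧
        (∀ w ∈ endComp (A := A) ℳ.comp l⁻¹, e ∘ₗ w = w) := by
      intro l
      by_cases hl : l ∈ endSupp (A := A) ℳ.comp
      · obtain ⟨ε', n, σ, w, hne, hσ, hw, hrep, hab1, hab2⟩ :=
          semiDivides_extract hun (hun.susp l) (H l hl).1
        refine ⟨ε', ?_, ?_, ?_⟩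
        · rw [hrep]
          exact mem_endMul_of_rep (fun i => mem_endComp_iff.mpr (hσ i))
            (fun i => mem_endComp_inv_iff.mpr (hw i))
        · intro f hf
          exact hab2 f (mem_endComp_iff.mp hf)
        · intro f hf
          exact hab1 f (mem_endComp_inv_iff.mp hf)
      · have hbotl : endComp (A := A) ℳ.comp l = ⊥ := by
          by_contra hne
          exact hl hne
        have hbotli : endComp (A := A) ℳ.comp l⁻¹ = ⊥ := by
          by_contra hne
          have h2 := hsymm l⁻¹ hne
          rw [inv_inv] at h2
          exact hl h2
        refine ⟨0, zero_mem _, ?_, ?_⟩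
        · intro f hf
          rw [hbotl] at hf
          rw [AddSubgroup.mem_bot.mp hf, LinearMap.zero_comp]
        · intro f hf
          rw [hbotli] at hf
          rw [AddSubgroup.mem_bot.mp hf, LinearMap.comp_zero]
    refine ⟨fun l => (key l).choose, fun l => ⟨(key l).choose_spec.1, fun w hw =>
      ⟨(key l).choose_spec.2.1 w hw,
       (key l⁻¹).choose_spec.2.2 w (by rw [inv_inv]; exact hw)⟩⟩⟩
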